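/- Let ψ: ℝⁿ → ℝ ∪ {+∞} be convex, F₁, F₂: ℝ → (0,∞) measurable, h: (0,∞) → (0,∞) continuous, and g ∈ F⁺_{ψ*}. Then for every linear map T on ℝⁿ with |det T| = 1, one has V_{h,F₁,F₂}(ψ∘T, g∘T^{−t}) = V_{h,F₁,F₂}(ψ, g), where T^{−t} is the inverse of the transpose of T. -/

import Mathlib

open MeasureTheory Real Set
open scoped RealInnerProductSpace

noncomputable section

/-- `ℝⁿ`: `n`-dimensional Euclidean space. -/
abbrev En (n : ℕ) := EuclideanSpace ℝ (Fin n)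

variable {n : ℕ}

/-- The Legendre transform `ψ*(y) = sup_x (⟨x,y⟩ - ψ(x))`. -/
def legendreT (ψ : En n → ℝ) (y : En n) : ℝ :=
  sSup {r : ℝ | ∃ x : En n, r = ⟪x, y⟫ - ψ x}

/-- The determinant of the Hessian `∇²ψ(x)` (the Hessian being the derivative of the
gradient). -/
def hessDet (ψ : En n → ℝ) (x : En n) : ℝ :=
  LinearMap.det ((fderiv ℝ (gradient ψ) x).toLinearMap)

/-- `X_ψ`: the set of points where the Hessian of `ψ` exists and is invertible. -/
def Xset (ψ : En n → ℝ) : Set (En n) :=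
  {x | DifferentiableAt ℝ ψ x ∧ DifferentiableAt ℝ (gradient ψ) x ∧ hessDet ψ x ≠ 0}

/-- `I(g, φ) = ∫_{X_φ} g`. -/
def Ifun (φ g : En n → ℝ) : ℝ := ∫ y in Xset φ, g y

/-- Membership in `F⁺_φ`: positive on `X_φ` and integrable there with positive integral. -/
def FplusOn (φ g : En n → ℝ) : Prop :=
  (∀ y ∈ Xset φ, 0 < g y) ∧ IntegrableOn g (Xset φ) ∧ 0 < Ifun φ g

/-- Log-concavity of `g` on a set `S`. -/
def IsLogConcaveOn (S : Set (En n)) (g : En n → ℝ) : Prop :=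
  (∀ x ∈ S, 0 ≤ g x) ∧
    ∀ x ∈ S, ∀ y ∈ S, ∀ a b : ℝ, 0 ≤ a → 0 ≤ b → a + b = 1 →
      a • x + b • y ∈ S → g x ^ a * g y ^ b ≤ g (a • x + b • y)

/-- The general `L_p` affine surface area `as_{p,F₁,F₂}(ψ)`. -/
def aspGen (p : ℝ) (F₁ F₂ : ℝ → ℝ) (ψ : En n → ℝ) : ℝ :=
  ∫ x in Xset ψ, (F₁ (ψ x)) ^ ((n : ℝ) / ((n : ℝ) + p)) *
    (F₂ (⟪x, gradient ψ x⟫ - ψ x) * hessDet ψ x) ^ (p / ((n : ℝ) + p))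

/-- `V_{p,F₁,F₂}(ψ, g)`. -/
def Vp (p : ℝ) (F₁ F₂ : ℝ → ℝ) (ψ g : En n → ℝ) : ℝ :=
  ∫ x in Xset ψ,
    (F₂ (⟪x, gradient ψ x⟫ - ψ x) / g (gradient ψ x)) ^ (p / (n : ℝ)) * F₁ (ψ x)

/-- The Orlicz mixed integral `V_{h,F₁,F₂}(ψ, g)`. -/
def Vh (h F₁ F₂ : ℝ → ℝ) (ψ g : En n → ℝ) : ℝ :=
  ∫ x in Xset ψ, h (g (gradient ψ x) / F₂ (⟪x, gradient ψ x⟫ - ψ x)) * F₁ (ψ x)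

/-- The class `Φ`: positive continuous functions on `(0,∞)` that are constant or
strictly convex. -/
def PhiClass (h : ℝ → ℝ) : Prop :=
  ContinuousOn h (Ioi 0) ∧ (∀ t ∈ Ioi (0 : ℝ), 0 < h t) ∧
    ((∃ c, ∀ t ∈ Ioi (0 : ℝ), h t = c) ∨ StrictConvexOn ℝ (Ioi 0) h)

/-- The class `Ψ`: positive continuous functions on `(0,∞)` that are constant or
increasing and strictly concave. -/
def PsiClass (h : ℝ → ℝ) : Prop :=
  ContinuousOn h (Ioi 0) ∧ (∀ t ∈ Ioi (0 : ℝ), 0 < h t) ∧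
    ((∃ c, ∀ t ∈ Ioi (0 : ℝ), h t = c) ∨
      (StrictMonoOn h (Ioi 0) ∧ StrictConcaveOn ℝ (Ioi 0) h))

/-- `(√(2π))ⁿ`. -/
def sqrtTwoPiPow (n : ℕ) : ℝ := (Real.sqrt (2 * π)) ^ n

/-- The general Orlicz affine surface area (infimum version; used when `h ∈ Φ`). -/
def asOrliczInf (h F₁ F₂ : ℝ → ℝ) (ψ : En n → ℝ) : ℝ :=
  sInf {r | ∃ g : En n → ℝ, FplusOn (legendreT ψ) g ∧
    Ifun (legendreT ψ) g = sqrtTwoPiPow n ∧ r = Vh h F₁ F₂ ψ g}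

/-- The general Orlicz affine surface area (supremum version; used when `h ∈ Ψ`). -/
def asOrliczSup (h F₁ F₂ : ℝ → ℝ) (ψ : En n → ℝ) : ℝ :=
  sSup {r | ∃ g : En n → ℝ, FplusOn (legendreT ψ) g ∧
    Ifun (legendreT ψ) g = sqrtTwoPiPow n ∧ r = Vh h F₁ F₂ ψ g}

/-- The general Orlicz geominimal surface area (infimum version; used when `h ∈ Φ`). -/
def GOrliczInf (h F₁ F₂ : ℝ → ℝ) (ψ : En n → ℝ) : ℝ :=
  sInf {r | ∃ g : En n → ℝ, FplusOn (legendreT ψ) g ∧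
    IsLogConcaveOn (Xset (legendreT ψ)) g ∧
    Ifun (legendreT ψ) g = sqrtTwoPiPow n ∧ r = Vh h F₁ F₂ ψ g}

/-- The general Orlicz geominimal surface area (supremum version; used when `h ∈ Ψ`). -/
def GOrliczSup (h F₁ F₂ : ℝ → ℝ) (ψ : En n → ℝ) : ℝ :=
  sSup {r | ∃ g : En n → ℝ, FplusOn (legendreT ψ) g ∧
    IsLogConcaveOn (Xset (legendreT ψ)) g ∧
    Ifun (legendreT ψ) g = sqrtTwoPiPow n ∧ r = Vh h F₁ F₂ ψ g}

/-- The general `L_p` geominimal surface area (infimum version; used when `p ≥ 0`). -/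
def GpInf (p : ℝ) (F₁ F₂ : ℝ → ℝ) (ψ : En n → ℝ) : ℝ :=
  sInf {r | ∃ g : En n → ℝ, FplusOn (legendreT ψ) g ∧
    IsLogConcaveOn (Xset (legendreT ψ)) g ∧
    r = (Vp p F₁ F₂ ψ g) ^ ((n : ℝ) / ((n : ℝ) + p)) *
        (Ifun (legendreT ψ) g) ^ (p / ((n : ℝ) + p))}

/-- The general `L_p` geominimal surface area (supremum version; used when `-n ≠ p < 0`). -/
def GpSup (p : ℝ) (F₁ F₂ : ℝ → ℝ) (ψ : En n → ℝ) : ℝ :=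
  sSup {r | ∃ g : En n → ℝ, FplusOn (legendreT ψ) g ∧
    IsLogConcaveOn (Xset (legendreT ψ)) g ∧
    r = (Vp p F₁ F₂ ψ g) ^ ((n : ℝ) / ((n : ℝ) + p)) *
        (Ifun (legendreT ψ) g) ^ (p / ((n : ℝ) + p))}

/-- `F̆(t) = sup{√(F₁(t₁)F₂(t₂)) : (t₁+t₂)/2 ≥ t}`. -/
def Fbreve (F₁ F₂ : ℝ → ℝ) (t : ℝ) : ℝ :=
  sSup {r | ∃ t₁ t₂ : ℝ, t ≤ (t₁ + t₂) / 2 ∧ r = Real.sqrt (F₁ t₁ * F₂ t₂)}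

/-- `I(F, c) = ∫_{ℝⁿ} F(c²‖x‖²/2) dx`. -/
def IF (n : ℕ) (F : ℝ → ℝ) (c : ℝ) : ℝ := ∫ x : En n, F (c ^ 2 * ‖x‖ ^ 2 / 2)

/-! The substitution `y = T x`: by the chain rule `∇(ψ ∘ T) = Tᵗ ∘ ∇ψ ∘ T`, so `X_{ψ∘T} = T⁻¹ X_ψ`
and the integrand of `V(ψ ∘ T, g ∘ T⁻ᵗ)` at `x` is that of `V(ψ, g)` at `T x`; a linear map with
`|det T| = 1` preserves Lebesgue measure. -/

namespace ContinuousLinearEquiv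

variable {𝕜 E F : Type*} [RCLike 𝕜] [NormedAddCommGroup E] [InnerProductSpace 𝕜 E]
  [CompleteSpace E] [NormedAddCommGroup F] [InnerProductSpace 𝕜 F] [CompleteSpace F]

theorem adjoint_symm_adjoint_apply (T : E ≃L[𝕜] F) (w : F) :
    ContinuousLinearMap.adjoint (T.symm : F →L[𝕜] E)
      (ContinuousLinearMap.adjoint (T : E →L[𝕜] F) w) = w :=
  ext_inner_right 𝕜 fun v => by simp [ContinuousLinearMap.adjoint_inner_left]

def adjoint (T : E ≃L[𝕜] F) : F ≃L[𝕜] E :=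
  equivOfInverse (ContinuousLinearMap.adjoint (T : E →L[𝕜] F))
    (ContinuousLinearMap.adjoint (T.symm : F →L[𝕜] E))
    T.adjoint_symm_adjoint_apply fun w => by simpa using T.symm.adjoint_symm_adjoint_apply w

@[simp]
theorem adjoint_apply (T : E ≃L[𝕜] F) (w : F) :
    T.adjoint w = ContinuousLinearMap.adjoint (T : E →L[𝕜] F) w := rfl

theorem gradient_comp (f : F → 𝕜) (T : E ≃L[𝕜] F) (x : E) :
    gradient (f ∘ T) x = T.adjoint (gradient f (T x)) :=
  ext_inner_right 𝕜 fun v => by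
    simp [inner_gradient_left, T.comp_right_fderiv, ContinuousLinearMap.adjoint_inner_left]

theorem gradient_comp' (f : F → 𝕜) (T : E ≃L[𝕜] F) :
    gradient (f ∘ T) = T.adjoint ∘ gradient f ∘ T :=
  funext (T.gradient_comp f)

theorem differentiableAt_gradient_comp_iff (f : F → 𝕜) (T : E ≃L[𝕜] F) (x : E) :
    DifferentiableAt 𝕜 (gradient (f ∘ T)) x ↔ DifferentiableAt 𝕜 (gradient f) (T x) := by
  rw [T.gradient_comp', T.adjoint.comp_differentiableAt_iff, T.comp_right_differentiableAt_iff]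

theorem fderiv_gradient_comp (f : F → 𝕜) (T : E ≃L[𝕜] F) (x : E) :
    fderiv 𝕜 (gradient (f ∘ T)) x =
      (T.adjoint : F →L[𝕜] E) ∘L fderiv 𝕜 (gradient f) (T x) ∘L (T : E →L[𝕜] F) := by
  rw [T.gradient_comp', T.adjoint.comp_fderiv, T.comp_right_fderiv]

end ContinuousLinearEquiv

theorem LinearMap.measurePreserving_of_abs_det_eq_one {E : Type*} [NormedAddCommGroup E]
    [NormedSpace ℝ E] [FiniteDimensional ℝ E] [MeasurableSpace E] [BorelSpace E]
    (μ : Measure E) [μ.IsAddHaarMeasure] (f : E →ₗ[ℝ] E) (hf : |LinearMap.det f| = 1) :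
    MeasurePreserving f μ μ := by
  have hdet : LinearMap.det f ≠ 0 := by
    intro h
    simp [h] at hf
  refine ⟨f.continuous_of_finiteDimensional.measurable, ?_⟩
  rw [Measure.map_linearMap_addHaar_eq_smul_addHaar μ hdet, abs_inv, hf, inv_one,
    ENNReal.ofReal_one, one_smul]

theorem hessDet_comp (ψ : En n → ℝ) (T : En n ≃L[ℝ] En n) (x : En n) :
    hessDet (ψ ∘ T) x = LinearMap.det (T.adjoint : En n →ₗ[ℝ] En n) * hessDet ψ (T x) *
      LinearMap.det (T : En n →ₗ[ℝ] En n) := by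
  simp only [hessDet, T.fderiv_gradient_comp, ContinuousLinearMap.toLinearMap_comp,
    LinearMap.det_comp, mul_assoc]
  rfl

theorem hessDet_comp_ne_zero_iff (ψ : En n → ℝ) (T : En n ≃L[ℝ] En n) (x : En n) :
    hessDet (ψ ∘ T) x ≠ 0 ↔ hessDet ψ (T x) ≠ 0 := by
  have h₁ : LinearMap.det (T.adjoint : En n →ₗ[ℝ] En n) ≠ 0 :=
    T.adjoint.toLinearEquiv.isUnit_det'.ne_zero
  have h₂ : LinearMap.det (T : En n →ₗ[ℝ] En n) ≠ 0 := T.toLinearEquiv.isUnit_det'.ne_zero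
  simp [hessDet_comp, h₁, h₂]

theorem Xset_comp (ψ : En n → ℝ) (T : En n ≃L[ℝ] En n) : Xset (ψ ∘ T) = T ⁻¹' Xset ψ := by
  ext x
  simp only [Xset, mem_ofPred_eq, mem_preimage, T.comp_right_differentiableAt_iff,
    T.differentiableAt_gradient_comp_iff, hessDet_comp_ne_zero_iff]

/-- `T⁻ᵗ` is encoded as the adjoint of `T⁻¹`. -/
theorem statement2_general (n : ℕ) (ψ : En n → ℝ) (F₁ F₂ h : ℝ → ℝ) (g : En n → ℝ)
    (T : En n ≃L[ℝ] En n)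
    (hT : |LinearMap.det ((T : En n →L[ℝ] En n).toLinearMap)| = 1) :
    Vh h F₁ F₂ (fun x => ψ (T x))
        (fun y => g (ContinuousLinearMap.adjoint ((T.symm : En n →L[ℝ] En n)) y)) =
      Vh h F₁ F₂ ψ g := by
  set V : En n → ℝ := fun y => h (g (gradient ψ y) / F₂ (⟪y, gradient ψ y⟫ - ψ y)) * F₁ (ψ y)
  have hintegrand : ∀ x, h (g (T.adjoint.symm (gradient (ψ ∘ T) x)) /
      F₂ (⟪x, gradient (ψ ∘ T) x⟫ - ψ (T x))) * F₁ (ψ (T x)) = V (T x) := by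
    intro x
    rw [T.gradient_comp, T.adjoint.symm_apply_apply, T.adjoint_apply,
      ContinuousLinearMap.adjoint_inner_right]
    rfl
  have hT_preserving := LinearMap.measurePreserving_of_abs_det_eq_one volume _ hT
  calc Vh h F₁ F₂ (ψ ∘ T) (g ∘ T.adjoint.symm) = ∫ x in T ⁻¹' Xset ψ, V (T x) := by
        simp only [Vh, Xset_comp, Function.comp_apply, hintegrand]
    _ = Vh h F₁ F₂ ψ g :=
      hT_preserving.setIntegral_preimage_emb T.toHomeomorph.measurableEmbedding _ _

/-- `SL±(n)`-invariance of the Orlicz mixed integral: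
`V_{h,F₁,F₂}(ψ∘T, g∘T⁻ᵗ) = V_{h,F₁,F₂}(ψ, g)` whenever `|det T| = 1`.
The inverse of the transpose of `T` is the adjoint (transpose) of `T⁻¹`. -/
theorem statement2 (n : ℕ) (ψ : En n → ℝ) (F₁ F₂ h : ℝ → ℝ) (g : En n → ℝ)
    (hψ : ConvexOn ℝ Set.univ ψ)
    (hF₁m : Measurable F₁) (hF₂m : Measurable F₂)
    (hF₁pos : ∀ t, 0 < F₁ t) (hF₂pos : ∀ t, 0 < F₂ t)
    (hhcont : ContinuousOn h (Set.Ioi 0)) (hhpos : ∀ t ∈ Set.Ioi (0 : ℝ), 0 < h t)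
    (hg : FplusOn (legendreT ψ) g)
    (T : En n ≃L[ℝ] En n)
    (hT : |LinearMap.det ((T : En n →L[ℝ] En n).toLinearMap)| = 1) :
    Vh h F₁ F₂ (fun x => ψ (T x))
        (fun y => g (ContinuousLinearMap.adjoint ((T.symm : En n →L[ℝ] En n)) y)) =
      Vh h F₁ F₂ ψ g :=
  statement2_general n ψ F₁ F₂ h g T hT
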